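/- Fix an integer q ≥ 2 and set H = 1 − 1/(2q). There exists a constant C > 0 such that for every integer n ≥ 2, | 1 − (1/(2 c_q n log n)) Σ_{k,l=0}^{n−1} ρ_H(k−l)^q | ≤ C / log n. (This is the estimate 1 − A_{q−1}(n) = O(1/log n) from the proof of Theorem 1.2, since σ_H² = 2 q! c_q.) -/

import Mathlib

/-!
For `H = 1 - 1/(2q)`, a second-order mean value theorem gives `ρ_H(r) = H(2H-1) θ^(2H-2)` for some
`θ ∈ (r-1, r+1)`, and since `(2H-2) q = -1` this is `ρ_H(r)^q = c_q / θ = c_q / r + O(1/r²)`.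
By evenness of `ρ_H`, the Toeplitz sum is `Σ_{k,l<n} ρ_H(k-l)^q = n + 2 Σ_{1≤r<n} (n-r) ρ_H(r)^q`.
With the harmonic numbers, `Σ_{1≤r<n} (n-r)/r = n h_{n-1} - (n-1) = n log n + O(n)`, while the
`O(1/r²)` errors add up to `O(n)`. Hence the double sum is `2 c_q n log n + O(n)`.
-/

open Finset

/-- Covariance of unit increments of fBm with Hurst index `H`. -/
noncomputable def rho (H : ℝ) (r : ℤ) : ℝ :=
  (|(r:ℝ) + 1| ^ (2*H) - 2 * |(r:ℝ)| ^ (2*H) + |(r:ℝ) - 1| ^ (2*H)) / 2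

theorem exists_hasDerivAt_eq_second_difference {f f' f'' : ℝ → ℝ} {x h : ℝ} (hh : 0 < h)
    (hf : ∀ y ∈ Set.Icc (x - h) (x + h), HasDerivAt f (f' y) y)
    (hf' : ∀ y ∈ Set.Ioo (x - h) (x + h), HasDerivAt f' (f'' y) y) :
    ∃ θ ∈ Set.Ioo (x - h) (x + h), f (x + h) - 2 * f x + f (x - h) = h ^ 2 * f'' θ := by
  have hg : ∀ y ∈ Set.Icc (x - h) x,
      HasDerivAt (fun y => f (y + h) - f y) (f' (y + h) - f' y) y := fun y hy =>
    ((hf (y + h) ⟨by linarith [hy.1], by linarith [hy.2]⟩).comp_add_const y h).sub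
      (hf y ⟨hy.1, by linarith [hy.2]⟩)
  obtain ⟨η, hη, hηslope⟩ := exists_hasDerivAt_eq_slope _ _ (by linarith : x - h < x)
    (fun y hy => (hg y hy).continuousAt.continuousWithinAt)
    (fun y hy => hg y (Set.Ioo_subset_Icc_self hy))
  have hsub : Set.Icc η (η + h) ⊆ Set.Ioo (x - h) (x + h) := fun y hy =>
    ⟨by linarith [hη.1, hy.1], by linarith [hη.2, hy.2]⟩
  obtain ⟨θ, hθ, hθslope⟩ := exists_hasDerivAt_eq_slope f' f'' (by linarith : η < η + h)
    (fun y hy => (hf' y (hsub hy)).continuousAt.continuousWithinAt)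
    (fun y hy => hf' y (hsub (Set.Ioo_subset_Icc_self hy)))
  refine ⟨θ, hsub (Set.Ioo_subset_Icc_self hθ), ?_⟩
  rw [hθslope, add_sub_cancel_left, hηslope, sub_add_cancel, sub_sub_cancel]
  field_simp
  ring

theorem sum_range_sum_range_sub_of_even {R : Type*} [CommRing R] (f : ℤ → R)
    (hf : ∀ r, f (-r) = f r) (n : ℕ) :
    ∑ k ∈ range n, ∑ l ∈ range n, f ((k : ℤ) - l) =
      2 * ∑ r ∈ range n, ((n : R) - r) * f r - n * f 0 := by
  induction n with
  | zero => simp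
  | succ n ih =>
    have hreflect : ∑ l ∈ range n, f ((n : ℤ) - l) = ∑ r ∈ range n, f ((r + 1 : ℕ) : ℤ) := by
      rw [← sum_range_reflect]
      refine sum_congr rfl fun r hr => congr_arg f ?_
      have := mem_range.1 hr
      omega
    have hneg : ∑ k ∈ range n, f ((k : ℤ) - n) = ∑ l ∈ range n, f ((n : ℤ) - l) :=
      sum_congr rfl fun k _ => by rw [← hf, neg_sub]
    have hweights : ∑ r ∈ range (n + 1), ((n + 1 : ℕ) - r : R) * f r =
        ∑ r ∈ range n, ((n : R) - r) * f r + (f 0 + ∑ r ∈ range n, f ((r + 1 : ℕ) : ℤ)) := by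
      have hsplit : ∀ r : ℕ, ((n + 1 : ℕ) - r : R) * f r = ((n : R) - r) * f r + f r := by
        intro r; push_cast; ring
      rw [sum_congr rfl fun r _ => hsplit r, sum_add_distrib, sum_range_succ' (fun r : ℕ => f r),
        sum_range_succ, sub_self, zero_mul, add_zero]
      simp only [Nat.cast_zero, add_comm (f 0)]
    rw [sum_range_succ, sum_congr rfl fun k _ => sum_range_succ _ n, sum_add_distrib,
      sum_range_succ, ih, hneg, hreflect, hweights, sub_self]
    push_cast
    ring

theorem abs_sum_Ico_sub_div_sub_mul_log_le (n : ℕ) :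
    |∑ r ∈ Ico 1 n, ((n : ℝ) - r) / r - n * Real.log n| ≤ n := by
  cases n with
  | zero => simp
  | succ m =>
    have hsum : ∑ r ∈ Ico 1 (m + 1), (((m + 1 : ℕ) : ℝ) - r) / r = (m + 1) * harmonic m - m := by
      rw [Ico_add_one_right_eq_Icc, harmonic_eq_sum_Icc]
      have hterm : ∀ r ∈ Icc 1 m, (((m + 1 : ℕ) : ℝ) - r) / r = (m + 1) * (r : ℝ)⁻¹ - 1 :=
        fun r hr => by
          have : (r : ℝ) ≠ 0 := by have := (mem_Icc.1 hr).1; positivity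
          push_cast; field_simp
      rw [sum_congr rfl hterm, sum_sub_distrib, ← mul_sum]
      simp
    have hlow := log_add_one_le_harmonic m
    have hup := harmonic_le_one_add_log m
    have hmono : Real.log m ≤ Real.log (m + 1) := by
      rcases m.eq_zero_or_pos with rfl | hm
      · simp
      · exact Real.log_le_log (by positivity) (by linarith)
    rw [hsum, abs_le]
    push_cast at *
    constructor <;> nlinarith

theorem abs_sum_Ico_sub_mul_sub_mul_log_le {a : ℕ → ℝ} {c B : ℝ}
    (ha : ∀ r, 1 ≤ r → |a r - c / r| ≤ B / r ^ 2) (n : ℕ) :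
    |∑ r ∈ Ico 1 n, ((n : ℝ) - r) * a r - c * n * Real.log n| ≤ (|c| + 2 * B) * n := by
  have hB : 0 ≤ B := by simpa using (abs_nonneg _).trans (ha 1 le_rfl)
  have hmain : |c * (∑ r ∈ Ico 1 n, ((n : ℝ) - r) / r - n * Real.log n)| ≤ |c| * n := by
    rw [abs_mul]
    exact mul_le_mul_of_nonneg_left (abs_sum_Ico_sub_div_sub_mul_log_le n) (abs_nonneg c)
  have herr : |∑ r ∈ Ico 1 n, ((n : ℝ) - r) * (a r - c / r)| ≤ 2 * B * n := by
    calc |∑ r ∈ Ico 1 n, ((n : ℝ) - r) * (a r - c / r)|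
        ≤ ∑ r ∈ Ico 1 n, (n : ℝ) * B * (r ^ 2 : ℝ)⁻¹ := by
          refine (abs_sum_le_sum_abs _ _).trans (sum_le_sum fun r hr => ?_)
          obtain ⟨hr1, hrn⟩ := mem_Ico.1 hr
          have hrn' : (r : ℝ) ≤ n := by exact_mod_cast hrn.le
          rw [abs_mul, abs_of_nonneg (sub_nonneg.2 hrn'), mul_assoc, ← div_eq_mul_inv]
          exact mul_le_mul (by linarith [(Nat.cast_nonneg r : (0 : ℝ) ≤ r)]) (ha r hr1)
            (abs_nonneg _) (Nat.cast_nonneg n)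
      _ ≤ n * B * 2 := by
          rw [← mul_sum]
          have hsq : ∑ r ∈ Ico 1 n, (r ^ 2 : ℝ)⁻¹ ≤ 2 :=
            (sum_Ioo_inv_sq_le (α := ℝ) 0 n).trans_eq (by norm_num)
          exact mul_le_mul_of_nonneg_left hsq (by positivity)
      _ = 2 * B * n := by ring
  have hsplit : ∑ r ∈ Ico 1 n, ((n : ℝ) - r) * a r - c * n * Real.log n =
      c * (∑ r ∈ Ico 1 n, ((n : ℝ) - r) / r - n * Real.log n) +
        ∑ r ∈ Ico 1 n, ((n : ℝ) - r) * (a r - c / r) := by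
    rw [mul_sub, mul_sum, ← add_sub_right_comm, ← sum_add_distrib]
    exact congrArg₂ _ (sum_congr rfl fun r _ => by ring) (by ring)
  rw [hsplit]
  exact (abs_add_le _ _).trans (by linarith)

theorem abs_inv_sub_inv_le {r θ : ℝ} (hr : 2 ≤ r) (hθ : θ ∈ Set.Ioo (r - 1) (r + 1)) :
    |θ⁻¹ - r⁻¹| ≤ 2 / r ^ 2 := by
  obtain ⟨h1, h2⟩ := hθ
  have hθ0 : 0 < θ := by linarith
  have hr0 : 0 < r := by linarith
  rw [inv_sub_inv hθ0.ne' hr0.ne', abs_div, abs_of_pos (mul_pos hθ0 hr0),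
    div_le_div_iff₀ (mul_pos hθ0 hr0) (by positivity)]
  have hdist : |r - θ| ≤ 1 := abs_le.2 ⟨by linarith, by linarith⟩
  nlinarith [mul_le_mul_of_nonneg_right hdist (sq_nonneg r)]

theorem rho_neg (H : ℝ) (r : ℤ) : rho H (-r) = rho H r := by
  rw [rho, rho, Int.cast_neg, show -(r : ℝ) + 1 = -((r : ℝ) - 1) by ring,
    show -(r : ℝ) - 1 = -((r : ℝ) + 1) by ring, abs_neg, abs_neg, abs_neg]
  ring

theorem rho_zero {H : ℝ} (hH : H ≠ 0) : rho H 0 = 1 := by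
  simp [rho, Real.zero_rpow (mul_ne_zero two_ne_zero hH)]

theorem exists_rho_eq {r : ℕ} (hr : 2 ≤ r) (H : ℝ) :
    ∃ θ ∈ Set.Ioo ((r : ℝ) - 1) (r + 1), rho H r = H * (2 * H - 1) * θ ^ (2 * H - 2) := by
  have hr' : (2 : ℝ) ≤ r := by exact_mod_cast hr
  obtain ⟨θ, hθ, hdiff⟩ := exists_hasDerivAt_eq_second_difference (f := fun y => y ^ (2 * H))
    (f' := fun y => 2 * H * y ^ (2 * H - 1))
    (f'' := fun y => 2 * H * ((2 * H - 1) * y ^ (2 * H - 1 - 1))) (x := r) one_pos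
    (fun y hy => Real.hasDerivAt_rpow_const (Or.inl (by linarith [hy.1])))
    (fun y hy => (Real.hasDerivAt_rpow_const (Or.inl (by linarith [hy.1]))).const_mul _)
  refine ⟨θ, hθ, ?_⟩
  rw [rho, Int.cast_natCast, abs_of_nonneg (by linarith), abs_of_nonneg (by linarith),
    abs_of_nonneg (by linarith), hdiff]
  ring_nf

-- The constant `c_q` of the paper.
noncomputable def rhoPowCoeff (q : ℕ) : ℝ :=
  ((2 * (q : ℝ) - 1) * ((q : ℝ) - 1) / (2 * (q : ℝ) ^ 2)) ^ q

theorem rhoPowCoeff_pos {q : ℕ} (hq : 2 ≤ q) : 0 < rhoPowCoeff q := by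
  have hq' : (2 : ℝ) ≤ q := by exact_mod_cast hq
  unfold rhoPowCoeff
  exact pow_pos (div_pos (mul_pos (by linarith) (by linarith)) (by positivity)) q

theorem exists_rho_pow_eq {q : ℕ} (hq : q ≠ 0) {r : ℕ} (hr : 2 ≤ r) :
    ∃ θ ∈ Set.Ioo ((r : ℝ) - 1) (r + 1),
      rho (1 - 1 / (2 * (q : ℝ))) r ^ q = rhoPowCoeff q / θ := by
  obtain ⟨θ, hθ, hrho⟩ := exists_rho_eq hr (1 - 1 / (2 * (q : ℝ)))
  have hθ0 : 0 < θ := by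
    have : (2 : ℝ) ≤ r := by exact_mod_cast hr
    linarith [hθ.1]
  have hq' : (q : ℝ) ≠ 0 := by exact_mod_cast hq
  refine ⟨θ, hθ, ?_⟩
  have hexp : (θ ^ (2 * (1 - 1 / (2 * (q : ℝ))) - 2)) ^ q = θ⁻¹ := by
    rw [← Real.rpow_natCast, ← Real.rpow_mul hθ0.le, ← Real.rpow_neg_one]
    congr 1
    field_simp
    ring
  rw [hrho, mul_pow, hexp, rhoPowCoeff, div_eq_mul_inv]
  congr 2
  field_simp
  ring

theorem exists_abs_rho_pow_sub_le {q : ℕ} (hq : q ≠ 0) :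
    ∃ B, ∀ r : ℕ, 1 ≤ r →
      |rho (1 - 1 / (2 * (q : ℝ))) r ^ q - rhoPowCoeff q / r| ≤ B / r ^ 2 := by
  set c := rhoPowCoeff q
  refine ⟨|rho (1 - 1 / (2 * (q : ℝ))) 1 ^ q - c| + 2 * |c|, fun r hr => ?_⟩
  rcases hr.eq_or_lt with rfl | hr
  · simp
  obtain ⟨θ, hθ, heq⟩ := exists_rho_pow_eq hq hr
  have hr' : (2 : ℝ) ≤ r := by exact_mod_cast hr
  calc |rho (1 - 1 / (2 * (q : ℝ))) r ^ q - c / r| = |c| * |θ⁻¹ - (r : ℝ)⁻¹| := by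
        rw [heq, ← abs_mul, mul_sub, div_eq_mul_inv, div_eq_mul_inv]
    _ ≤ |c| * (2 / r ^ 2) := mul_le_mul_of_nonneg_left (abs_inv_sub_inv_le hr' hθ) (abs_nonneg c)
    _ ≤ _ := by
        rw [mul_div_assoc', mul_comm]
        exact div_le_div_of_nonneg_right (le_add_of_nonneg_left (abs_nonneg _)) (by positivity)

theorem exists_abs_sum_sum_rho_pow_sub_le {q : ℕ} (hq : q ≠ 0) :
    ∃ K > 0, ∀ n : ℕ, |∑ k ∈ range n, ∑ l ∈ range n, rho (1 - 1 / (2 * (q : ℝ))) ((k : ℤ) - l) ^ q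
      - 2 * rhoPowCoeff q * n * Real.log n| ≤ K * n := by
  obtain ⟨B, hB⟩ := exists_abs_rho_pow_sub_le hq
  have hB0 : 0 ≤ B := by simpa using (abs_nonneg _).trans (hB 1 le_rfl)
  refine ⟨1 + 2 * (|rhoPowCoeff q| + 2 * B), by positivity, fun n => ?_⟩
  have hH : 1 - 1 / (2 * (q : ℝ)) ≠ 0 := by
    have : (1 : ℝ) ≤ q := by exact_mod_cast Nat.one_le_iff_ne_zero.2 hq
    have : 1 / (2 * (q : ℝ)) < 1 := by rw [div_lt_one (by positivity)]; linarith
    linarith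
  rcases n.eq_zero_or_pos with rfl | hn
  · simp
  have hsplit : ∑ r ∈ range n, ((n : ℝ) - r) * rho (1 - 1 / (2 * (q : ℝ))) r ^ q =
      n + ∑ r ∈ Ico 1 n, ((n : ℝ) - r) * rho (1 - 1 / (2 * (q : ℝ))) r ^ q := by
    rw [range_eq_Ico, sum_eq_sum_Ico_succ_bot hn, Nat.cast_zero, Nat.cast_zero, rho_zero hH,
      one_pow, sub_zero, mul_one, zero_add]
  rw [sum_range_sum_range_sub_of_even (fun r => rho (1 - 1 / (2 * (q : ℝ))) r ^ q)
    (fun r => by rw [rho_neg]), hsplit, rho_zero hH, one_pow, mul_one,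
    show ∀ x y : ℝ, 2 * (n + x) - n - 2 * y * n * Real.log n = n + 2 * (x - y * n * Real.log n) by
      intros; ring]
  have hweighted := abs_sum_Ico_sub_mul_sub_mul_log_le hB n
  calc _ ≤ |(n : ℝ)| + |2 * _| := abs_add_le _ _
    _ ≤ _ := by rw [abs_mul, Nat.abs_cast, abs_two]; nlinarith

/-- Estimate `1 − A_{q−1}(n) = O(1/log n)`: for `q ≥ 2` and `H = 1−1/(2q)`, there is `C > 0`
such that for every `n ≥ 2`,
`|1 − (1/(2 c_q n log n)) Σ_{k,l=0}^{n−1} ρ_H(k−l)^q| ≤ C / log n`. -/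
theorem A_q_minus_one_estimate (q : ℕ) (hq : 2 ≤ q) :
    ∃ C > 0, ∀ n : ℕ, 2 ≤ n →
      |1 - (1 / (2 * ((2*(q:ℝ) - 1) * ((q:ℝ) - 1) / (2*(q:ℝ)^2)) ^ q * (n:ℝ) * Real.log n)) *
            ∑ k ∈ range n, ∑ l ∈ range n, rho (1 - 1/(2*(q:ℝ))) ((k:ℤ) - (l:ℤ)) ^ q|
        ≤ C / Real.log n := by
  obtain ⟨K, hK0, hK⟩ := exists_abs_sum_sum_rho_pow_sub_le (q := q) (by omega)
  have hc := rhoPowCoeff_pos hq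
  refine ⟨K / (2 * rhoPowCoeff q), by positivity, fun n hn => ?_⟩
  have hlog : 0 < Real.log n := Real.log_pos (by exact_mod_cast hn)
  have hden : 0 < 2 * rhoPowCoeff q * n * Real.log n := by positivity
  rw [← rhoPowCoeff, one_div_mul_eq_div, one_sub_div hden.ne', abs_div, abs_of_pos hden,
    abs_sub_comm, div_le_iff₀ hden]
  calc _ ≤ K * n := hK n
    _ = K / (2 * rhoPowCoeff q) / Real.log n * (2 * rhoPowCoeff q * n * Real.log n) := by
      field_simp
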